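/- arXiv:math/0702360 — 3 statements merged into one kernel-verified Lean document; each statement's English description precedes it below -/
import Mathlib

section
/- The probability that a random 2×2 matrix from the Gaussian Orthogonal Ensemble is positive definite equals P₂ = (2−√2)/4. -/
/-!
Write the matrix as `[[a, c], [c, b]]`; it is positive definite iff `a > 0` and `c² < ab`.
In the coordinates `x = (a + b)/√2`, `y = (b - a)/√2`, `z = √2 c`, which are again independent
standard Gaussians (the first two by rotation invariance of the planar standard Gaussian), the
event becomes the circular cone `x > 0, y² + z² < x²` of half-angle `π/4`. Given `x > 0`, the
planar Gaussian `(y, z)` lies in the disk of radius `x` with probability `1 - exp (-x²/2)` (polar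
coordinates), and integrating this against the Gaussian density over `x > 0` gives
`1/2 - 1/(2√2) = (2 - √2)/4`.
-/

open ProbabilityTheory MeasureTheory Real Set
open scoped Matrix

theorem Matrix.posDef_fin_two_symm_iff {a b c : ℝ} :
    (Matrix.of ![![a, c], ![c, b]]).PosDef ↔ 0 < a ∧ c ^ 2 < a * b := by
  have hQ : ∀ x : Fin 2 → ℝ, star x ⬝ᵥ (Matrix.of ![![a, c], ![c, b]] *ᵥ x) =
      a * x 0 ^ 2 + 2 * c * x 0 * x 1 + b * x 1 ^ 2 := fun x => by
    simp [dotProduct, Fin.sum_univ_two]; ring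
  have hHerm : (Matrix.of ![![a, c], ![c, b]]).IsHermitian := by
    ext i j; fin_cases i <;> fin_cases j <;> rfl
  simp only [Matrix.posDef_iff_dotProduct_mulVec, hQ, hHerm, true_and]
  constructor
  · intro h
    have ha : 0 < a := by simpa using h (x := ![1, 0]) (by simp)
    have hdet := h (x := ![-c, a]) (by simp [ha.ne'])
    simp only [Matrix.cons_val_zero, Matrix.cons_val_one] at hdet
    exact ⟨ha, by nlinarith⟩
  · rintro ⟨ha, hdet⟩ x hx
    -- `a Q(x) = (a x₀ + c x₁)² + (ab - c²) x₁²`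
    rcases eq_or_ne (x 1) 0 with h1 | h1
    · have h0 : x 0 ≠ 0 := fun h0 => hx (funext fun i => by fin_cases i <;> simp [h0, h1])
      rw [h1]
      nlinarith [sq_pos_of_ne_zero h0]
    · nlinarith [sq_nonneg (a * x 0 + c * x 1), mul_pos (sub_pos.2 hdet) (sq_pos_of_ne_zero h1)]

theorem setIntegral_disk_eq_radial (f : ℝ → ℝ) {R : ℝ} (hR : 0 ≤ R) :
    ∫ p in {p : ℝ × ℝ | p.1 ^ 2 + p.2 ^ 2 < R ^ 2}, f (p.1 ^ 2 + p.2 ^ 2) =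
      2 * π * ∫ r in 0..R, r * f (r ^ 2) := by
  have hD : MeasurableSet {p : ℝ × ℝ | p.1 ^ 2 + p.2 ^ 2 < R ^ 2} :=
    measurableSet_lt (by fun_prop) measurable_const
  have hA : MeasurableSet (Ioo 0 R ×ˢ Ioo (-π) π) := measurableSet_Ioo.prod measurableSet_Ioo
  have hpolar : ∀ q ∈ polarCoord.target,
      q.1 • {p : ℝ × ℝ | p.1 ^ 2 + p.2 ^ 2 < R ^ 2}.indicator
          (fun p => f (p.1 ^ 2 + p.2 ^ 2)) (polarCoord.symm q) =
        (Ioo 0 R ×ˢ Ioo (-π) π).indicator (fun q => q.1 * f (q.1 ^ 2)) q := by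
    rintro ⟨r, θ⟩ ⟨hr, hθ⟩
    simp only [mem_Ioi] at hr hθ
    have hnorm : (r * cos θ) ^ 2 + (r * sin θ) ^ 2 = r ^ 2 := by
      linear_combination r ^ 2 * cos_sq_add_sin_sq θ
    have hiff : r ^ 2 < R ^ 2 ↔ r < R := pow_lt_pow_iff_left₀ (le_of_lt hr) hR two_ne_zero
    simp only [polarCoord_symm_apply, indicator_apply, mem_ofPred_eq, hnorm, hiff, mem_prod,
      mem_Ioo, hr, hθ, true_and, and_true, smul_eq_mul]
    split_ifs <;> simp
  have hsplit := setIntegral_prod_mul (μ := volume) (ν := volume) (fun r => r * f (r ^ 2))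
    (fun _ => (1 : ℝ)) (Ioo 0 R) (Ioo (-π) π)
  simp only [mul_one, setIntegral_const, smul_eq_mul] at hsplit
  rw [← integral_indicator hD, ← integral_comp_polarCoord_symm,
    setIntegral_congr_fun polarCoord.open_target.measurableSet hpolar,
    setIntegral_indicator hA, polarCoord_target, inter_eq_self_of_subset_right
      (prod_mono_left Ioo_subset_Ioi_self), Measure.volume_eq_prod, hsplit,
    intervalIntegral.integral_of_le hR, integral_Ioc_eq_integral_Ioo, measureReal_def,
    Real.volume_Ioo, ENNReal.toReal_ofReal (by linarith [pi_pos])]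
  ring

theorem integral_mul_exp_neg_sq_div_two (R : ℝ) :
    ∫ r in 0..R, r * exp (-r ^ 2 / 2) = 1 - exp (-R ^ 2 / 2) := by
  have hderiv : ∀ r ∈ uIcc 0 R,
      HasDerivAt (fun r => -exp (-r ^ 2 / 2)) (r * exp (-r ^ 2 / 2)) r := fun r _ => by
    refine (((hasDerivAt_pow 2 r).fun_neg.div_const 2).exp).fun_neg.congr_deriv ?_
    norm_num
    ring
  rw [intervalIntegral.integral_eq_sub_of_hasDerivAt hderiv
    (Continuous.intervalIntegrable (by fun_prop) 0 R)]
  simp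
  ring

theorem gaussianPDFReal_zero_one_mul (x y : ℝ) :
    gaussianPDFReal 0 1 x * gaussianPDFReal 0 1 y = (2 * π)⁻¹ * exp (-(x ^ 2 + y ^ 2) / 2) := by
  have hsqrt : √(2 * π) * √(2 * π) = 2 * π := mul_self_sqrt (by positivity)
  simp only [gaussianPDFReal_def, NNReal.coe_one, mul_one, sub_zero]
  rw [mul_mul_mul_comm, ← exp_add, ← mul_inv, hsqrt]
  ring_nf

theorem gaussianReal_prod_gaussianReal_disk {R : ℝ} (hR : 0 ≤ R) :
    ((gaussianReal 0 1).prod (gaussianReal 0 1)) {p | p.1 ^ 2 + p.2 ^ 2 < R ^ 2} =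
      ENNReal.ofReal (1 - exp (-R ^ 2 / 2)) := by
  have hD : MeasurableSet {p : ℝ × ℝ | p.1 ^ 2 + p.2 ^ 2 < R ^ 2} :=
    measurableSet_lt (by fun_prop) measurable_const
  have hint : Integrable (fun p : ℝ × ℝ => gaussianPDFReal 0 1 p.1 * gaussianPDFReal 0 1 p.2) :=
    (integrable_gaussianPDFReal 0 1).mul_prod (integrable_gaussianPDFReal 0 1)
  rw [gaussianReal_of_var_ne_zero 0 one_ne_zero, prod_withDensity (measurable_gaussianPDF 0 1)
    (measurable_gaussianPDF 0 1), ← Measure.volume_eq_prod, withDensity_apply _ hD]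
  simp only [gaussianPDF, ← ENNReal.ofReal_mul (gaussianPDFReal_nonneg 0 1 _)]
  rw [← ofReal_integral_eq_lintegral_ofReal hint.integrableOn
    (ae_of_all _ fun p => mul_nonneg (gaussianPDFReal_nonneg 0 1 _) (gaussianPDFReal_nonneg 0 1 _))]
  simp only [gaussianPDFReal_zero_one_mul]
  rw [integral_const_mul, setIntegral_disk_eq_radial (fun t => exp (-t / 2)) hR,
    integral_mul_exp_neg_sq_div_two]
  field_simp

theorem integral_Ioi_gaussianPDFReal_mul_one_sub_exp :
    ∫ x in Ioi 0, gaussianPDFReal 0 1 x * (1 - exp (-x ^ 2 / 2)) = (2 - √2) / 4 := by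
  have hpdf : ∀ x : ℝ, gaussianPDFReal 0 1 x * (1 - exp (-x ^ 2 / 2)) =
      (√(2 * π))⁻¹ * (exp (-(1 / 2) * x ^ 2) - exp (-1 * x ^ 2)) := fun x => by
    have hsq : exp (-x ^ 2 / 2) * exp (-x ^ 2 / 2) = exp (-1 * x ^ 2) := by
      rw [← exp_add]; ring_nf
    simp only [gaussianPDFReal_def, NNReal.coe_one, mul_one, sub_zero]
    rw [show -(1 / 2) * x ^ 2 = -x ^ 2 / 2 by ring, ← hsq]
    ring
  have hint : ∀ b : ℝ, 0 < b → IntegrableOn (fun x => exp (-b * x ^ 2)) (Ioi 0) :=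
    fun b hb => (integrable_exp_neg_mul_sq hb).integrableOn
  simp only [hpdf]
  rw [integral_const_mul, integral_sub (hint _ (by norm_num)) (hint _ one_pos),
    integral_gaussian_Ioi, integral_gaussian_Ioi, div_one, div_div_eq_mul_div, div_one,
    mul_comm π 2, sqrt_mul zero_le_two]
  have h2 : √2 ^ 2 = 2 := sq_sqrt zero_le_two
  field_simp
  linear_combination 2 * h2

theorem gaussianReal_prod_cone :
    ((gaussianReal 0 1).prod ((gaussianReal 0 1).prod (gaussianReal 0 1)))
        {p | 0 < p.1 ∧ p.2.1 ^ 2 + p.2.2 ^ 2 < p.1 ^ 2} =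
      ENNReal.ofReal ((2 - √2) / 4) := by
  have hC : MeasurableSet {p : ℝ × ℝ × ℝ | 0 < p.1 ∧ p.2.1 ^ 2 + p.2.2 ^ 2 < p.1 ^ 2} :=
    measurableSet_setOfPred.2 (by fun_prop)
  have hslice : ∀ x : ℝ, ((gaussianReal 0 1).prod (gaussianReal 0 1))
      (Prod.mk x ⁻¹' {p | 0 < p.1 ∧ p.2.1 ^ 2 + p.2.2 ^ 2 < p.1 ^ 2}) =
        ENNReal.ofReal ((Ioi 0).indicator (fun x => 1 - exp (-x ^ 2 / 2)) x) := fun x => by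
    by_cases hx : 0 < x
    · simp only [preimage_ofPred_eq, hx, true_and, indicator_of_mem (mem_Ioi.2 hx)]
      exact gaussianReal_prod_gaussianReal_disk hx.le
    · simp [hx]
  have hbound : ∀ x : ℝ, 0 ≤ 1 - exp (-x ^ 2 / 2) ∧ 1 - exp (-x ^ 2 / 2) ≤ 1 := fun x =>
    ⟨sub_nonneg.2 (exp_le_one_iff.2 (by nlinarith)), by linarith [exp_pos (-x ^ 2 / 2)]⟩
  have hint : Integrable ((Ioi 0).indicator fun x => 1 - exp (-x ^ 2 / 2)) (gaussianReal 0 1) := by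
    refine Integrable.of_bound
      (Measurable.aestronglyMeasurable (by fun_prop (disch := exact measurableSet_Ioi)))
      1 (ae_of_all _ fun x => ?_)
    by_cases hx : x ∈ Ioi 0
    · rw [indicator_of_mem hx, Real.norm_of_nonneg (hbound x).1]
      exact (hbound x).2
    · simp [hx]
  rw [Measure.prod_apply hC]
  simp only [hslice]
  rw [← ofReal_integral_eq_lintegral_ofReal hint
      (ae_of_all _ fun x => indicator_nonneg (fun x _ => (hbound x).1) x),
    integral_gaussianReal_eq_integral_smul one_ne_zero]
  simp only [smul_eq_mul, ← indicator_mul_right]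
  rw [integral_indicator measurableSet_Ioi, integral_Ioi_gaussianPDFReal_mul_one_sub_exp]

theorem gaussianReal_prod_prod_half_eq_map :
    (gaussianReal 0 1).prod ((gaussianReal 0 1).prod (gaussianReal 0 (1 / 2))) =
      ((gaussianReal 0 1).prod ((gaussianReal 0 1).prod (gaussianReal 0 1))).map
        (fun p => ((p.1 - p.2.1) / √2, (p.1 + p.2.1) / √2, p.2.2 / √2)) := by
  set γ := gaussianReal 0 1
  set rot : ℝ × ℝ → ℝ × ℝ := ⇑(ContinuousLinearMap.rotation (E := ℝ) (-(π / 4)))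
  have hrot : (γ.prod γ).map rot = γ.prod γ := IsGaussian.map_rotation_eq_self (by simp [γ]) _
  have hhalf : γ.map (· / √2) = gaussianReal 0 (1 / 2) := by
    rw [gaussianReal_map_div_const]
    congr 1
    · simp
    · ext; simp
  calc γ.prod (γ.prod (gaussianReal 0 (1 / 2)))
      = (((γ.prod γ).map rot).prod (γ.map (· / √2))).map MeasurableEquiv.prodAssoc := by
        rw [hrot, hhalf, (measurePreserving_prodAssoc _ _ _).map_eq]
    _ = ((γ.prod (γ.prod γ)).map MeasurableEquiv.prodAssoc.symm).map
          (MeasurableEquiv.prodAssoc ∘ Prod.map rot (· / √2)) := by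
        rw [Measure.map_prod_map _ _ (by fun_prop) (by fun_prop), Measure.map_map (by fun_prop)
          (by fun_prop), (measurePreserving_prodAssoc _ _ _).symm.map_eq]
    _ = _ := by
      rw [Measure.map_map (by fun_prop) (by fun_prop)]
      congr 1
      funext p
      simp [rot, ContinuousLinearMap.rotation_apply, MeasurableEquiv.prodAssoc, sqrt_div_self']
      constructor <;> ring

/-- `P₂ = (2−√2)/4`: the probability that a random `2×2` GOE matrix
(diagonal entries standard Gaussians, off-diagonal entry a centered Gaussian
of variance `1/2`, all independent) is positive definite. -/
theorem goe_two_posdef_prob :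
    ((gaussianReal 0 1).prod ((gaussianReal 0 1).prod (gaussianReal 0 (1 / 2))))
        {p : ℝ × ℝ × ℝ | (Matrix.of ![![p.1, p.2.2], ![p.2.2, p.2.1]]).PosDef} =
      ENNReal.ofReal ((2 - Real.sqrt 2) / 4) := by
  have hS : MeasurableSet {p : ℝ × ℝ × ℝ | 0 < p.1 ∧ p.2.2 ^ 2 < p.1 * p.2.1} :=
    measurableSet_setOfPred.2 (by fun_prop)
  have h2 : √2 ^ 2 = 2 := sq_sqrt zero_le_two
  simp only [Matrix.posDef_fin_two_symm_iff]
  rw [gaussianReal_prod_prod_half_eq_map, Measure.map_apply (by fun_prop) hS,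
    ← gaussianReal_prod_cone]
  congr 1
  ext ⟨x, y, z⟩
  simp only [mem_preimage, mem_ofPred_eq, div_pow, div_mul_div_comm, ← sq, h2,
    div_pos_iff_of_pos_right (sqrt_pos.2 zero_lt_two),
    div_lt_div_iff_of_pos_right (two_pos : (0 : ℝ) < 2)]
  constructor
  · rintro ⟨hxy, hz⟩
    have hx : 0 < x := by nlinarith [sq_nonneg z]
    exact ⟨hx, by nlinarith⟩
  · rintro ⟨hx, hyz⟩
    exact ⟨by nlinarith [sq_nonneg z], by nlinarith⟩
end

section
/- For all r > 0 and integers d ≥ 2, the quantity Λ(d,r) = 2B(d,r)⁴/A(d,r)² − 1 satisfies the scaling bounds Λ(2, r√(d−1)) ≤ Λ(d,r) ≤ Λ(2, (√5/2) r√(d−1)). -/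
/-- `A(d,r)² = (d(d−1)r⁴ + 2dr² + 2)/((dr²+1)(1+r²)²)`. -/
noncomputable def Asq (d : ℕ) (r : ℝ) : ℝ :=
  ((d : ℝ) * ((d : ℝ) - 1) * r ^ 4 + 2 * d * r ^ 2 + 2) /
    (((d : ℝ) * r ^ 2 + 1) * (1 + r ^ 2) ^ 2)

/-- `B(d,r)² = ((d−1)r² + 1)/(1+r²)`. -/
noncomputable def Bsq (d : ℕ) (r : ℝ) : ℝ :=
  (((d : ℝ) - 1) * r ^ 2 + 1) / (1 + r ^ 2)

/-- `Λ(d,r) = 2B(d,r)⁴/A(d,r)² − 1`. -/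
noncomputable def Lam (d : ℕ) (r : ℝ) : ℝ := 2 * (Bsq d r) ^ 2 / Asq d r - 1


/-! With `t = (d-1)r²` one has `Λ(2, c√(d-1)) = 2c²(d-1)`, so the claim reads `2t ≤ Λ(d,r) ≤ 5t/2`.
Clearing the denominator of `Λ(d,r) + 1`, the two gaps factor as `r⁴(d-1)(d-2)` and
`(d-1)r²(d(d-1)r⁴/2 + 2r² + 1)`, which are nonnegative for every natural `d`, resp. every `d ≥ 1`. -/

lemma Int.cast_mul_cast_sub_one_nonneg (m : ℤ) : 0 ≤ (m : ℝ) * ((m : ℝ) - 1) := by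
  have : 0 ≤ m * (m - 1) := by
    rcases le_or_gt m 0 with hm | hm <;> nlinarith
  exact_mod_cast this

lemma Lam_two (s : ℝ) : Lam 2 s = 2 * s ^ 2 := by
  simp only [Lam, Asq, Bsq, Nat.cast_ofNat]
  field_simp
  ring

lemma Lam_two_mul_sqrt (c : ℝ) {a : ℝ} (ha : 0 ≤ a) : Lam 2 (c * √a) = 2 * a * c ^ 2 := by
  rw [Lam_two, mul_pow, Real.sq_sqrt ha]
  ring

lemma Asq_numerator_pos (d : ℕ) (r : ℝ) :
    0 < (d : ℝ) * ((d : ℝ) - 1) * r ^ 4 + 2 * d * r ^ 2 + 2 := by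
  have := Int.cast_mul_cast_sub_one_nonneg d
  push_cast at this
  positivity

lemma Lam_eq (d : ℕ) (r : ℝ) :
    Lam d r = 2 * (((d : ℝ) - 1) * r ^ 2 + 1) ^ 2 * ((d : ℝ) * r ^ 2 + 1) /
      ((d : ℝ) * ((d : ℝ) - 1) * r ^ 4 + 2 * d * r ^ 2 + 2) - 1 := by
  have := (Asq_numerator_pos d r).ne'
  simp only [Lam, Asq, Bsq]
  field_simp

lemma two_mul_sub_one_mul_sq_le_Lam (d : ℕ) (r : ℝ) : 2 * ((d : ℝ) - 1) * r ^ 2 ≤ Lam d r := by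
  have hgap : 0 ≤ ((d : ℝ) - 1) * ((d : ℝ) - 1 - 1) := by
    simpa using Int.cast_mul_cast_sub_one_nonneg ((d : ℤ) - 1)
  rw [Lam_eq, le_sub_iff_add_le, le_div_iff₀ (Asq_numerator_pos d r)]
  linear_combination mul_nonneg (pow_nonneg (sq_nonneg r) 2) hgap

lemma Lam_le_five_div_two_mul_sub_one_mul_sq (d : ℕ) (hd : 1 ≤ d) (r : ℝ) :
    Lam d r ≤ 5 / 2 * ((d : ℝ) - 1) * r ^ 2 := by
  have hd' : (0 : ℝ) ≤ d - 1 := by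
    rw [sub_nonneg]
    exact_mod_cast hd
  have hcubic : 0 ≤ (d : ℝ) * ((d : ℝ) - 1) * r ^ 4 / 2 + 2 * r ^ 2 + 1 := by
    have := Int.cast_mul_cast_sub_one_nonneg d
    push_cast at this
    positivity
  rw [Lam_eq, sub_le_iff_le_add, div_le_iff₀ (Asq_numerator_pos d r)]
  linear_combination mul_nonneg (mul_nonneg hd' (sq_nonneg r)) hcubic

theorem Lam_scaling_general (d : ℕ) (hd : 2 ≤ d) (r : ℝ) :
    Lam 2 (r * Real.sqrt ((d : ℝ) - 1)) ≤ Lam d r ∧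
      Lam d r ≤ Lam 2 (Real.sqrt 5 / 2 * r * Real.sqrt ((d : ℝ) - 1)) := by
  have hd' : (0 : ℝ) ≤ d - 1 := by
    rw [sub_nonneg]
    exact_mod_cast (by omega : 1 ≤ d)
  rw [Lam_two_mul_sqrt _ hd', Lam_two_mul_sqrt _ hd', mul_pow, div_pow, Real.sq_sqrt (by norm_num)]
  constructor
  · linarith [two_mul_sub_one_mul_sq_le_Lam d r]
  · linarith [Lam_le_five_div_two_mul_sub_one_mul_sq d (by omega) r]

/-- The scaling law `Λ(2, r√(d−1)) ≤ Λ(d,r) ≤ Λ(2, (√5/2) r√(d−1))`. -/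
theorem Lam_scaling (d : ℕ) (hd : 2 ≤ d) (r : ℝ) (hr : 0 < r) :
    Lam 2 (r * Real.sqrt ((d : ℝ) - 1)) ≤ Lam d r ∧
      Lam d r ≤ Lam 2 (Real.sqrt 5 / 2 * r * Real.sqrt ((d : ℝ) - 1)) :=
  Lam_scaling_general d hd r
end

section
/- The expected number of real critical points of a random univariate polynomial of degree at most d ≥ 3 with Bombieri–Weyl Gaussian coefficients equals C_{d,1} = (2√(d−1)/π) ∫₀^∞ sqrt(d(d−1)r⁴ + 2dr² + 2)/((dr²+1)(r²+1)) dr, and this quantity satisfies C_{d,1} ≤ 1 + √(d−2). -/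
/-!
Multiplying the integrand by `√(d-1)` turns its numerator into `√(d X² + (d-2))` with
`X = (d-1) r² + 1`, which is at most `√d X + √(d-2)`. The resulting majorant splits into partial
fractions `A / (d r² + 1) + B / (r² + 1)`, whose integrals over `(0, ∞)` are arctangent integrals.
After integration the claim becomes `A / √d + B ≤ 1 + √(d-2)`, and the gap is a positive multiple
of `(√d - 1)(√d - √(d-2)) ≥ 0`.
-/

open MeasureTheory Real Set

lemma inv_mul_sq_add_one_eq_comp (a : ℝ) (ha : 0 ≤ a) :
    (fun r : ℝ => (a * r ^ 2 + 1)⁻¹) = fun r => (1 + (√a * r) ^ 2)⁻¹ := by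
  funext r
  rw [mul_pow, sq_sqrt ha, add_comm]

lemma integrableOn_Ioi_inv_mul_sq_add_one {a : ℝ} (ha : 0 < a) :
    IntegrableOn (fun r : ℝ => (a * r ^ 2 + 1)⁻¹) (Ioi 0) := by
  rw [inv_mul_sq_add_one_eq_comp a ha.le]
  have h := (integrableOn_Ioi_comp_mul_left_iff (fun x : ℝ => (1 + x ^ 2)⁻¹) 0
    (sqrt_pos.2 ha)).2 integrable_inv_one_add_sq.integrableOn
  simpa only [mul_zero] using h

lemma integral_Ioi_inv_mul_sq_add_one {a : ℝ} (ha : 0 < a) :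
    ∫ r in Ioi (0 : ℝ), (a * r ^ 2 + 1)⁻¹ = π / (2 * √a) := by
  rw [inv_mul_sq_add_one_eq_comp a ha.le,
    integral_comp_mul_left_Ioi (fun x : ℝ => (1 + x ^ 2)⁻¹) 0 (sqrt_pos.2 ha), mul_zero,
    integral_Ioi_inv_one_add_sq, arctan_zero, sub_zero, smul_eq_mul, inv_mul_eq_div, div_div]

lemma sqrt_mul_sq_add_le {a b x : ℝ} (ha : 0 ≤ a) (hb : 0 ≤ b) (hx : 0 ≤ x) :
    √(a * x ^ 2 + b) ≤ √a * x + √b := by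
  rw [sqrt_le_iff]
  refine ⟨by positivity, ?_⟩
  nlinarith [sq_sqrt ha, sq_sqrt hb, mul_nonneg (mul_nonneg (sqrt_nonneg a) (sqrt_nonneg b)) hx]

section

variable {D : ℝ}

lemma sqrt_sub_one_mul_sqrt_le (hD : 2 ≤ D) (r : ℝ) :
    √(D - 1) * √(D * (D - 1) * r ^ 4 + 2 * D * r ^ 2 + 2) ≤
      √D * ((D - 1) * r ^ 2 + 1) + √(D - 2) := by
  have hX : 0 ≤ (D - 1) * r ^ 2 + 1 := by nlinarith [sq_nonneg r]
  calc √(D - 1) * √(D * (D - 1) * r ^ 4 + 2 * D * r ^ 2 + 2)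
      = √(D * ((D - 1) * r ^ 2 + 1) ^ 2 + (D - 2)) := by
        rw [← sqrt_mul (by linarith)]
        ring_nf
    _ ≤ √D * ((D - 1) * r ^ 2 + 1) + √(D - 2) :=
        sqrt_mul_sq_add_le (by linarith) (by linarith) hX

/-- The coefficients of the partial fraction decomposition
`(√D X + √(D-2)) / ((D r² + 1)(r² + 1)) = A / (D r² + 1) + B / (r² + 1)`, `X = (D-1) r² + 1`. -/
noncomputable def majorantCoeffs (D : ℝ) : ℝ × ℝ :=
  ((√D + √(D - 2) * D) / (D - 1), (√D * (D - 2) - √(D - 2)) / (D - 1))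

lemma sqrt_sub_one_mul_integrand_le (hD : 2 ≤ D) (r : ℝ) :
    √(D - 1) * (√(D * (D - 1) * r ^ 4 + 2 * D * r ^ 2 + 2) / ((D * r ^ 2 + 1) * (r ^ 2 + 1))) ≤
      (majorantCoeffs D).1 * (D * r ^ 2 + 1)⁻¹ + (majorantCoeffs D).2 * (r ^ 2 + 1)⁻¹ := by
  have hD1 : D - 1 ≠ 0 := by linarith
  have hden : 0 < (D * r ^ 2 + 1) * (r ^ 2 + 1) := by have := sq_nonneg r; positivity
  have partial_fractions :
      (majorantCoeffs D).1 * (D * r ^ 2 + 1)⁻¹ + (majorantCoeffs D).2 * (r ^ 2 + 1)⁻¹ =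
        (√D * ((D - 1) * r ^ 2 + 1) + √(D - 2)) / ((D * r ^ 2 + 1) * (r ^ 2 + 1)) := by
    rw [majorantCoeffs]
    field_simp
    ring
  rw [partial_fractions, ← mul_div_assoc]
  exact div_le_div_of_nonneg_right (sqrt_sub_one_mul_sqrt_le hD r) hden.le

lemma integrableOn_majorant (hD : 2 ≤ D) :
    IntegrableOn
      (fun r => (majorantCoeffs D).1 * (D * r ^ 2 + 1)⁻¹ + (majorantCoeffs D).2 * (r ^ 2 + 1)⁻¹)
      (Ioi 0) :=
  ((integrableOn_Ioi_inv_mul_sq_add_one (by linarith)).const_mul _).add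
    (by simpa using (integrableOn_Ioi_inv_mul_sq_add_one one_pos).const_mul _)

lemma integral_majorant (hD : 2 ≤ D) :
    ∫ r in Ioi (0 : ℝ),
        (majorantCoeffs D).1 * (D * r ^ 2 + 1)⁻¹ + (majorantCoeffs D).2 * (r ^ 2 + 1)⁻¹ =
      (majorantCoeffs D).1 * (π / (2 * √D)) + (majorantCoeffs D).2 * (π / 2) := by
  have h1 := integral_Ioi_inv_mul_sq_add_one (a := 1) one_pos
  simp only [one_mul, sqrt_one, mul_one] at h1
  rw [integral_add ((integrableOn_Ioi_inv_mul_sq_add_one (by linarith)).const_mul _)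
      (by simpa using (integrableOn_Ioi_inv_mul_sq_add_one one_pos).const_mul _),
    integral_const_mul, integral_const_mul, integral_Ioi_inv_mul_sq_add_one (by linarith), h1]

lemma integral_sqrt_sub_one_mul_integrand_le (hD : 2 ≤ D) :
    ∫ r in Ioi (0 : ℝ),
        √(D - 1) * (√(D * (D - 1) * r ^ 4 + 2 * D * r ^ 2 + 2) / ((D * r ^ 2 + 1) * (r ^ 2 + 1))) ≤
      (majorantCoeffs D).1 * (π / (2 * √D)) + (majorantCoeffs D).2 * (π / 2) := by
  rw [← integral_majorant hD]
  refine integral_mono_of_nonneg (.of_forall fun r => ?_) (integrableOn_majorant hD)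
    (.of_forall (sqrt_sub_one_mul_integrand_le hD))
  have : 0 ≤ D := by linarith
  positivity

lemma majorantCoeffs_bound (hD : 2 ≤ D) :
    (majorantCoeffs D).1 / √D + (majorantCoeffs D).2 ≤ 1 + √(D - 2) := by
  set t := √D
  set s := √(D - 2)
  have ht2 : t ^ 2 = D := sq_sqrt (by linarith)
  have hs2 : s ^ 2 = D - 2 := sq_sqrt (by linarith)
  have ht1 : 1 ≤ t := one_le_sqrt.2 (by linarith)
  have hst : s ≤ t := sqrt_le_sqrt (by linarith)
  have hD1 : 0 < D - 1 := by linarith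
  have ht0 : 0 < t := by linarith
  rw [majorantCoeffs, div_div, ← sub_nonneg]
  have expand : 1 + s - ((t + s * D) / ((D - 1) * t) + (t * (D - 2) - s) / (D - 1)) =
      s * t * ((t - 1) * (t - s)) / ((D - 1) * t) := by
    clear_value t s
    subst ht2
    field_simp
    linear_combination (t - 1) * hs2
  rw [expand]
  exact div_nonneg (mul_nonneg (by positivity) (mul_nonneg (by linarith) (by linarith)))
    (by positivity)

end

/-- The expected number of critical points of a Bombieri–Weyl random univariate
polynomial of degree at most `d ≥ 3`,
`C_{d,1} = (2√(d−1)/π) ∫₀^∞ √(d(d−1)r⁴+2dr²+2)/((dr²+1)(r²+1)) dr`,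
satisfies `C_{d,1} ≤ 1 + √(d−2)`. -/
theorem expected_critical_points_le (d : ℕ) (hd : 3 ≤ d) :
    2 * Real.sqrt ((d : ℝ) - 1) / π *
        ∫ r in Set.Ioi (0 : ℝ),
          Real.sqrt ((d : ℝ) * ((d : ℝ) - 1) * r ^ 4 + 2 * d * r ^ 2 + 2) /
            (((d : ℝ) * r ^ 2 + 1) * (r ^ 2 + 1)) ≤
      1 + Real.sqrt ((d : ℝ) - 2) := by
  have hD : (2 : ℝ) ≤ d := by exact_mod_cast (by omega : 2 ≤ d)
  calc 2 * √((d : ℝ) - 1) / π * ∫ r in Ioi (0 : ℝ),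
          √((d : ℝ) * (d - 1) * r ^ 4 + 2 * d * r ^ 2 + 2) / ((d * r ^ 2 + 1) * (r ^ 2 + 1))
      = 2 / π * ∫ r in Ioi (0 : ℝ), √((d : ℝ) - 1) *
          (√((d : ℝ) * (d - 1) * r ^ 4 + 2 * d * r ^ 2 + 2) / ((d * r ^ 2 + 1) * (r ^ 2 + 1))) := by
        rw [integral_const_mul]
        ring
    _ ≤ 2 / π * ((majorantCoeffs d).1 * (π / (2 * √d)) + (majorantCoeffs d).2 * (π / 2)) := by
        gcongr
        exact integral_sqrt_sub_one_mul_integrand_le hD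
    _ = (majorantCoeffs d).1 / √d + (majorantCoeffs d).2 := by
        field_simp
    _ ≤ 1 + √((d : ℝ) - 2) := majorantCoeffs_bound hD
end
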